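/- Let H be a finite graph (possibly with loops) with k automorphic similarity classes, G_0 a graph with distinguished vertex v_0, and G_n the graph obtained by appending a path of n new vertices at v_0. Then there exist real numbers λ_1,…,λ_k (depending only on H) and real numbers c_1,…,c_k (depending on G_0, v_0, H) such that hom(G_n,H) = Σ_{i=1}^k c_i λ_i^n for all n ≥ 0. -/

import Mathlib

/-- A graph, possibly with loops but without multiple edges: a symmetric
adjacency relation on the vertex type. -/
structure LoopGraph (V : Type*) where
  Adj : V → V → Prop
  symm : ∀ {u v}, Adj u v → Adj v u

/-- `f` is a homomorphism (H-coloring) from `G` to `H`. -/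
def LoopGraph.IsHom {A B : Type*} (G : LoopGraph A) (H : LoopGraph B) (f : A → B) : Prop :=
  ∀ ⦃x y⦄, G.Adj x y → H.Adj (f x) (f y)

/-- The number of homomorphisms from `G` to `H`. -/
noncomputable def homCount {A B : Type*} (G : LoopGraph A) (H : LoopGraph B) : ℕ :=
  Nat.card {f : A → B // G.IsHom H f}

/-- `e` is an automorphism of `H`. -/
def IsAut {V : Type*} (H : LoopGraph V) (e : V ≃ V) : Prop :=
  ∀ a b, H.Adj (e a) (e b) ↔ H.Adj a b

/-- `u` and `v` are automorphically similar in `H`. -/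
def AutSim {V : Type*} (H : LoopGraph V) (u v : V) : Prop :=
  ∃ e : V ≃ V, IsAut H e ∧ e u = v

/-- The path on `n` vertices. -/
def pathGraph (n : ℕ) : LoopGraph (Fin n) where
  Adj i j := j.val = i.val + 1 ∨ i.val = j.val + 1
  symm h := h.symm

/-- Upward adjacency for `eGraph`. -/
def eUp (n : ℕ) (i j : Fin n) : Prop :=
  (j.val = i.val + 1 ∧ j.val ≤ n - 2) ∨ (i.val = n - 4 ∧ j.val = n - 1)

/-- The tree `E_n`: the path on `n-1` vertices `0,…,n-2` with a pendant
vertex `n-1` attached to vertex `n-4` (distance 2 from the end `n-2`). -/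
def eGraph (n : ℕ) : LoopGraph (Fin n) where
  Adj i j := eUp n i j ∨ eUp n j i
  symm h := h.symm

/-- Vertices of the spherically symmetric rooted tree `T(x,y,z)`. -/
abbrev TVert (x y z : ℕ) : Type :=
  Unit ⊕ Fin x ⊕ (Fin x × Fin y) ⊕ (Fin x × Fin y × Fin z)

/-- Parent-to-child adjacency in `T(x,y,z)`. -/
def tUp (x y z : ℕ) : TVert x y z → TVert x y z → Prop
  | Sum.inl _, Sum.inr (Sum.inl _) => True
  | Sum.inr (Sum.inl i), Sum.inr (Sum.inr (Sum.inl p)) => p.1 = i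
  | Sum.inr (Sum.inr (Sum.inl p)), Sum.inr (Sum.inr (Sum.inr q)) =>
      q.1 = p.1 ∧ q.2.1 = p.2
  | _, _ => False

/-- The tree `T(x,y,z)`: the root has `x` children, each child has `y`
children, each grandchild has `z` children. -/
def tGraph (x y z : ℕ) : LoopGraph (TVert x y z) where
  Adj a b := tUp x y z a b ∨ tUp x y z b a
  symm h := h.symm

/-- `T̂(x,y,z)`: `T(x,y,z)` with a loop added at the root. -/
def tHatGraph (x y z : ℕ) : LoopGraph (TVert x y z) where
  Adj a b := tUp x y z a b ∨ tUp x y z b a ∨ (a = Sum.inl () ∧ b = Sum.inl ())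
  symm := by
    rintro a b (h | h | ⟨h1, h2⟩)
    · exact Or.inr (Or.inl h)
    · exact Or.inl h
    · exact Or.inr (Or.inr ⟨h2, h1⟩)

/-- The distance level of a vertex of `T(x,y,z)` from the root. -/
def tLevel {x y z : ℕ} : TVert x y z → Fin 4
  | Sum.inl _ => 0
  | Sum.inr (Sum.inl _) => 1
  | Sum.inr (Sum.inr (Sum.inl _)) => 2
  | Sum.inr (Sum.inr (Sum.inr _)) => 3

/-- Upward adjacency for the path-like extension of `G` at `v0`. -/
def extUp {A : Type*} (G : LoopGraph A) (v0 : A) (n : ℕ) :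
    (A ⊕ Fin n) → (A ⊕ Fin n) → Prop := fun a b =>
  (∃ u w, G.Adj u w ∧ a = Sum.inl u ∧ b = Sum.inl w) ∨
  (∃ i : Fin n, i.val = 0 ∧ a = Sum.inl v0 ∧ b = Sum.inr i) ∨
  (∃ i j : Fin n, j.val = i.val + 1 ∧ a = Sum.inr i ∧ b = Sum.inr j)

/-- `G_n`: the graph obtained from `G_0 = G` by appending a path of `n` new
vertices at `v0`. -/
def pathAppend {A : Type*} (G : LoopGraph A) (v0 : A) (n : ℕ) : LoopGraph (A ⊕ Fin n) where
  Adj a b := extUp G v0 n a b ∨ extUp G v0 n b a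
  symm h := h.symm

/-!
A homomorphism `G_n → H` is a homomorphism `g : G_0 → H` followed by a walk of length `n` in `H`
starting at `g v₀`, so `hom(G_n, H) = ∑_g (Aⁿ 𝟙)(g v₀)` for the adjacency matrix `A` of `H`.
The automorphism classes form an equitable partition of `A`: the number of neighbours a vertex
has in a given class depends only on its own class. Hence `Aⁿ 𝟙` is constant on classes, equal
to `Mⁿ 𝟙` for the `k × k` quotient matrix `M`. As `|Hⁱ| M i j` counts the edges between the
classes `i` and `j`, conjugating `M` by `diag(√|Hⁱ|)` gives a symmetric matrix, so `M` is
diagonalizable over `ℝ` and `u ⬝ᵥ Mⁿ w` is a combination of the `n`-th powers of its eigenvalues.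
-/

open Finset Matrix

open scoped Classical in
theorem Nat.card_subtype_prod_and {α β : Type*} [Fintype α] [Finite β] (P : α → Prop)
    (Q : α → β → Prop) :
    Nat.card {x : α × β // P x.1 ∧ Q x.1 x.2} = ∑ a, if P a then Nat.card {b // Q a b} else 0 := by
  rw [Nat.card_congr (Equiv.subtypeProdEquivSigmaSubtype fun a b => P a ∧ Q a b), Nat.card_sigma]
  refine sum_congr rfl fun a _ => ?_
  split_ifs with h
  · exact Nat.card_congr (Equiv.subtypeEquivRight fun b => and_iff_right h)
  · have : IsEmpty {b // P a ∧ Q a b} := ⟨fun b => h b.2.1⟩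
    exact Nat.card_of_isEmpty

namespace Matrix

variable {ι : Type*} [DecidableEq ι]

section EquitableQuotient

variable {V R : Type*} [Fintype V] [Semiring R]

theorem sum_mul_comp_eq_dotProduct [Fintype ι] (f : V → R) (π : V → ι)
    (y : ι → R) : ∑ a, f a * y (π a) = (fun j => ∑ a with π a = j, f a) ⬝ᵥ y := by
  rw [dotProduct, ← sum_fiberwise univ π]
  refine sum_congr rfl fun j _ => ?_
  rw [sum_mul]
  exact sum_congr rfl fun a ha => by rw [(mem_filter.mp ha).2]

def IsEquitableQuotient (A : Matrix V V R) (π : V → ι) (M : Matrix ι ι R) :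
    Prop :=
  ∀ u j, ∑ s with π s = j, A u s = M (π u) j

variable {A : Matrix V V R} {π : V → ι} {M : Matrix ι ι R}

theorem IsEquitableQuotient.mulVec_comp [Fintype ι] (h : A.IsEquitableQuotient π M)
    (x : ι → R) : A *ᵥ (x ∘ π) = (M *ᵥ x) ∘ π := by
  ext u
  simp only [mulVec, dotProduct, Function.comp_apply, ← h u]
  exact sum_mul_comp_eq_dotProduct (A u) π x

theorem IsEquitableQuotient.pow_mulVec_comp [Fintype ι] [DecidableEq V]
    (h : A.IsEquitableQuotient π M) (n : ℕ) (x : ι → R) :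
    A ^ n *ᵥ (x ∘ π) = (M ^ n *ᵥ x) ∘ π := by
  induction n with
  | zero => simp
  | succ n ih => rw [pow_succ', pow_succ', ← mulVec_mulVec, ih, h.mulVec_comp, mulVec_mulVec]

theorem IsEquitableQuotient.card_mul_comm (h : A.IsEquitableQuotient π M) (hA : A.IsSymm)
    (i j : ι) : (#{u | π u = i} : R) * M i j = #{u | π u = j} * M j i := by
  have hcount : ∀ i j, (#{u | π u = i} : R) * M i j =
      ∑ u with π u = i, ∑ s with π s = j, A u s := by
    intro i j
    rw [← nsmul_eq_mul, ← sum_const]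
    exact sum_congr rfl fun u hu => by rw [h, (mem_filter.mp hu).2]
  rw [hcount, hcount]
  exact sum_comm.trans (sum_congr rfl fun s _ => sum_congr rfl fun u _ => hA.apply s u)

end EquitableQuotient

variable [Fintype ι]

theorem dotProduct_pow_mulVec_units_conj_diagonal {R : Type*} [CommSemiring R]
    (U : (Matrix ι ι R)ˣ) (μ u w : ι → R) (n : ℕ) :
    u ⬝ᵥ (((U : Matrix ι ι R) * diagonal μ * (↑U⁻¹ : Matrix ι ι R)) ^ n *ᵥ w) =
      ∑ i, (u ᵥ* ↑U) i * ((↑U⁻¹ : Matrix ι ι R) *ᵥ w) i * μ i ^ n := by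
  rw [Units.conj_pow, diagonal_pow, ← mulVec_mulVec, ← mulVec_mulVec, dotProduct_mulVec]
  simp only [dotProduct, mulVec_diagonal, Pi.pow_apply]
  exact sum_congr rfl fun i _ => by ring

theorem exists_units_conj_diagonal_of_weighted_symm {M : Matrix ι ι ℝ} {d : ι → ℝ}
    (hd : ∀ i, 0 < d i) (hM : ∀ i j, d i * M i j = d j * M j i) :
    ∃ (U : (Matrix ι ι ℝ)ˣ) (μ : ι → ℝ),
      M = (U : Matrix ι ι ℝ) * diagonal μ * (↑U⁻¹ : Matrix ι ι ℝ) := by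
  set r : ι → ℝ := fun i => √(d i)
  have hr : ∀ i, r i ≠ 0 := fun i => (Real.sqrt_pos.mpr (hd i)).ne'
  have hrr : ∀ i, r i * r i = d i := fun i => Real.mul_self_sqrt (hd i).le
  let D : (Matrix ι ι ℝ)ˣ :=
    ⟨diagonal r, diagonal r⁻¹, by simp [diagonal_mul_diagonal, hr], by
      simp [diagonal_mul_diagonal, hr]⟩
  set S : Matrix ι ι ℝ := (D : Matrix ι ι ℝ) * M * (↑D⁻¹ : Matrix ι ι ℝ)
  have hS : S.IsHermitian := by
    refine IsHermitian.ext fun i j => ?_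
    have h := hM j i
    simp only [S, D, Units.inv_mk, mul_diagonal, diagonal_mul, star_trivial, Pi.inv_apply,
      ← hrr] at h ⊢
    have := hr i
    have := hr j
    field_simp
    linear_combination h
  let W : (Matrix ι ι ℝ)ˣ := Unitary.toUnits hS.eigenvectorUnitary
  obtain ⟨μ, hμ⟩ : ∃ μ, S = (W : Matrix ι ι ℝ) * diagonal μ * (↑W⁻¹ : Matrix ι ι ℝ) :=
    ⟨hS.eigenvalues, by
      simpa [Unitary.conjStarAlgAut_apply, W, Unitary.star_eq_inv] using hS.spectral_theorem⟩
  refine ⟨D⁻¹ * W, μ, ?_⟩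
  calc M = (↑D⁻¹ : Matrix ι ι ℝ) * S * D := by
        simp only [S, mul_assoc, Units.inv_mul_cancel_left, Units.inv_mul, mul_one]
    _ = _ := by rw [_root_.mul_inv_rev, inv_inv]; simp only [hμ, Units.val_mul, mul_assoc]

theorem exists_eigen_expansion_of_weighted_symm {M : Matrix ι ι ℝ} {d : ι → ℝ}
    (hd : ∀ i, 0 < d i) (hM : ∀ i j, d i * M i j = d j * M j i) :
    ∃ μ : ι → ℝ, ∀ u w : ι → ℝ, ∃ c : ι → ℝ, ∀ n : ℕ,
      u ⬝ᵥ (M ^ n *ᵥ w) = ∑ i, c i * μ i ^ n := by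
  obtain ⟨U, μ, rfl⟩ := exists_units_conj_diagonal_of_weighted_symm hd hM
  exact ⟨μ, fun u w => ⟨fun i => (u ᵥ* ↑U) i * ((↑U⁻¹ : Matrix ι ι ℝ) *ᵥ w) i,
    dotProduct_pow_mulVec_units_conj_diagonal U μ u w⟩⟩

end Matrix

namespace LoopGraph

variable {V : Type*}

theorem adj_comm (H : LoopGraph V) (u v : V) : H.Adj u v ↔ H.Adj v u :=
  ⟨H.symm, H.symm⟩

open scoped Classical in
noncomputable def adjMatrix (R : Type*) [Zero R] [One R] (H : LoopGraph V) : Matrix V V R :=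
  of fun u s => if H.Adj u s then 1 else 0

theorem adjMatrix_isSymm (R : Type*) [Zero R] [One R] (H : LoopGraph V) :
    (adjMatrix R H).IsSymm :=
  IsSymm.ext fun u s => by classical exact if_congr (H.adj_comm s u) rfl rfl

end LoopGraph

section Automorphisms

variable {V : Type*} {H : LoopGraph V}

theorem IsAut.refl : IsAut H (Equiv.refl V) := fun _ _ => Iff.rfl

theorem IsAut.symm {e : V ≃ V} (he : IsAut H e) : IsAut H e.symm := fun a b => by
  rw [← he, e.apply_symm_apply, e.apply_symm_apply]

theorem IsAut.trans {e f : V ≃ V} (he : IsAut H e) (hf : IsAut H f) : IsAut H (e.trans f) :=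
  fun a b => (hf (e a) (e b)).trans (he a b)

theorem IsAut.adjMatrix_apply {R : Type*} [Zero R] [One R] {e : V ≃ V} (he : IsAut H e)
    (u s : V) : H.adjMatrix R (e u) (e s) = H.adjMatrix R u s :=
  by classical exact if_congr (he u s) rfl rfl

theorem AutSim.refl (v : V) : AutSim H v v := ⟨Equiv.refl V, IsAut.refl, rfl⟩

theorem AutSim.symm {u v : V} : AutSim H u v → AutSim H v u := by
  rintro ⟨e, he, rfl⟩
  exact ⟨e.symm, he.symm, e.symm_apply_apply u⟩

theorem AutSim.trans {u v w : V} : AutSim H u v → AutSim H v w → AutSim H u w := by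
  rintro ⟨e, he, rfl⟩ ⟨f, hf, rfl⟩
  exact ⟨e.trans f, he.trans hf, rfl⟩

theorem exists_surjective_autSim_index {ι : Type*} {cls : ι → Set V}
    (horb : ∀ i, ∃ w, cls i = {t | AutSim H w t}) (hcover : ∀ t : V, ∃! i, t ∈ cls i) :
    ∃ π : V → ι, Function.Surjective π ∧ ∀ s t, π s = π t ↔ AutSim H s t := by
  choose w hw using horb
  choose π hmem huniq using hcover
  have hsim : ∀ t, AutSim H (w (π t)) t := fun t => by simpa [hw] using hmem t
  refine ⟨π, fun i => ⟨w i, (huniq _ i (by simpa [hw] using AutSim.refl (w i))).symm⟩,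
    fun s t => ⟨fun hst => ?_, fun hst => huniq t (π s) ?_⟩⟩
  · exact (hst ▸ hsim s).symm.trans (hsim t)
  · simpa [hw] using (hsim s).trans hst

theorem exists_isEquitableQuotient_adjMatrix {ι : Type*} [Fintype V] [DecidableEq ι]
    (R : Type*) [Semiring R] {π : V → ι} (hsurj : Function.Surjective π)
    (hπ : ∀ s t, π s = π t ↔ AutSim H s t) :
    ∃ M : Matrix ι ι R, (H.adjMatrix R).IsEquitableQuotient π M := by
  refine ⟨of fun i j => ∑ s with π s = j, H.adjMatrix R (Function.surjInv hsurj i) s,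
    fun u j => ?_⟩
  set r := Function.surjInv hsurj (π u)
  obtain ⟨e, he, hru⟩ := (hπ r u).mp (Function.surjInv_eq hsurj (π u))
  have hπe : ∀ s, π (e s) = π s := fun s => ((hπ s (e s)).mpr ⟨e, he, rfl⟩).symm
  show ∑ s with π s = j, H.adjMatrix R u s = ∑ s with π s = j, H.adjMatrix R r s
  rw [← hru, sum_filter, sum_filter, ← e.sum_comp]
  simp only [hπe, he.adjMatrix_apply]

end Automorphisms

namespace LoopGraph

variable {V : Type*}

/-- `p` lists the `n` vertices after the start `t` of a walk in `H`. -/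
def WalkFrom (H : LoopGraph V) {n : ℕ} (t : V) (p : Fin n → V) : Prop :=
  (∀ j : Fin n, (j : ℕ) = 0 → H.Adj t (p j)) ∧
  (∀ i j : Fin n, (j : ℕ) = (i : ℕ) + 1 → H.Adj (p i) (p j))

noncomputable def walkFromCount (H : LoopGraph V) (n : ℕ) (t : V) : ℕ :=
  Nat.card {p : Fin n → V // H.WalkFrom t p}

theorem walkFrom_succ_iff (H : LoopGraph V) {n : ℕ} (t : V) (p : Fin (n + 1) → V) :
    H.WalkFrom t p ↔ H.Adj t (p 0) ∧ H.WalkFrom (p 0) (Fin.tail p) := by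
  simp [WalkFrom, Fin.forall_fin_succ, Fin.tail]

theorem walkFromCount_zero (H : LoopGraph V) (t : V) : H.walkFromCount 0 t = 1 := by
  have : Unique {p : Fin 0 → V // H.WalkFrom t p} :=
    ⟨⟨⟨Fin.elim0, fun j => j.elim0, fun i => i.elim0⟩⟩,
      fun _ => Subtype.ext (funext fun j => j.elim0)⟩
  exact Nat.card_unique

open scoped Classical in
theorem walkFromCount_succ [Fintype V] (H : LoopGraph V) (n : ℕ) (t : V) :
    H.walkFromCount (n + 1) t = ∑ s, if H.Adj t s then H.walkFromCount n s else 0 :=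
  (Nat.card_congr ((Fin.consEquiv fun _ => V).symm.subtypeEquiv (walkFrom_succ_iff H t))).trans
    (Nat.card_subtype_prod_and _ _)

theorem walkFromCount_eq_adjMatrix_pow_mulVec [Fintype V] [DecidableEq V] (R : Type*)
    [Semiring R] (H : LoopGraph V) (n : ℕ) (t : V) :
    (H.walkFromCount n t : R) = (H.adjMatrix R ^ n *ᵥ 1) t := by
  induction n generalizing t with
  | zero => simp [walkFromCount_zero]
  | succ n ih =>
    rw [walkFromCount_succ, pow_succ', ← mulVec_mulVec, ← funext ih]
    simp [mulVec, dotProduct, adjMatrix]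

theorem isHom_pathAppend_iff {A : Type*} (G0 : LoopGraph A) (v0 : A) (H : LoopGraph V) {n : ℕ}
    (f : A ⊕ Fin n → V) :
    (pathAppend G0 v0 n).IsHom H f ↔
      G0.IsHom H (f ∘ Sum.inl) ∧ H.WalkFrom (f (Sum.inl v0)) (f ∘ Sum.inr) := by
  constructor
  · intro hf
    exact ⟨fun u w h => hf (Or.inl (Or.inl ⟨u, w, h, rfl, rfl⟩)),
      fun j hj => hf (Or.inl (Or.inr (Or.inl ⟨j, hj, rfl, rfl⟩))),
      fun i j hij => hf (Or.inl (Or.inr (Or.inr ⟨i, j, hij, rfl, rfl⟩)))⟩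
  · rintro ⟨hg, hw₀, hw⟩
    have hup : ∀ a b, extUp G0 v0 n a b → H.Adj (f a) (f b) := by
      rintro a b (⟨u, w, h, rfl, rfl⟩ | ⟨i, hi, rfl, rfl⟩ | ⟨i, j, hij, rfl, rfl⟩)
      · exact hg h
      · exact hw₀ i hi
      · exact hw i j hij
    rintro a b (h | h)
    · exact hup a b h
    · exact H.symm (hup b a h)

open scoped Classical in
theorem homCount_pathAppend {A : Type*} [Fintype A] [Fintype V] (G0 : LoopGraph A) (v0 : A)
    (H : LoopGraph V) (n : ℕ) :
    homCount (pathAppend G0 v0 n) H =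
      ∑ g : A → V, if G0.IsHom H g then H.walkFromCount n (g v0) else 0 :=
  (Nat.card_congr ((Equiv.sumArrowEquivProdArrow A (Fin n) V).subtypeEquiv
    (isHom_pathAppend_iff G0 v0 H))).trans (Nat.card_subtype_prod_and _ _)

end LoopGraph

theorem stmt4 {V A : Type*} [Fintype V] [Fintype A] (H : LoopGraph V)
    (k : ℕ) (cls : Fin k → Set V)
    (horb : ∀ i, ∃ w, cls i = {t | AutSim H w t})
    (hcover : ∀ t : V, ∃! i, t ∈ cls i)
    (G0 : LoopGraph A) (v0 : A) :
    ∃ lam c : Fin k → ℝ, ∀ n : ℕ,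
      (homCount (pathAppend G0 v0 n) H : ℝ) = ∑ i, c i * lam i ^ n := by
  classical
  obtain ⟨π, hsurj, hπ⟩ := exists_surjective_autSim_index horb hcover
  obtain ⟨M, hM⟩ := exists_isEquitableQuotient_adjMatrix ℝ hsurj hπ
  have hclass : ∀ i, (0 : ℝ) < #{u | π u = i} := fun i => by
    exact_mod_cast card_pos.mpr ⟨Function.surjInv hsurj i, by simp [Function.surjInv_eq]⟩
  obtain ⟨lam, hlam⟩ := exists_eigen_expansion_of_weighted_symm hclass
    (hM.card_mul_comm (H.adjMatrix_isSymm ℝ))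
  set f : (A → V) → ℝ := fun g => if G0.IsHom H g then 1 else 0
  obtain ⟨c, hc⟩ := hlam (fun j => ∑ g with π (g v0) = j, f g) 1
  refine ⟨lam, c, fun n => ?_⟩
  have hwalk : ∀ t, (H.walkFromCount n t : ℝ) = (M ^ n *ᵥ 1) (π t) := fun t =>
    (H.walkFromCount_eq_adjMatrix_pow_mulVec ℝ n t).trans (congrFun (hM.pow_mulVec_comp n 1) t)
  calc (homCount (pathAppend G0 v0 n) H : ℝ)
      = ∑ g, f g * (M ^ n *ᵥ 1) (π (g v0)) := by
        rw [LoopGraph.homCount_pathAppend]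
        push_cast
        exact sum_congr rfl fun g _ => by simp only [f, ite_mul, one_mul, zero_mul, hwalk]
    _ = ∑ i, c i * lam i ^ n := by
        rw [sum_mul_comp_eq_dotProduct f (fun g => π (g v0)), hc]
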